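/- Let S and A be nonempty sets (states and actions) with transition function Tr : S × A → PMF(S) (a probability mass function on S for each state-action pair). Let A₁,…,A_m be DFAs over the alphabet Σ = S × A, with A_i = (Q_i, q_{i0}, δ_i, F_i) and δ_i total, and let r₁,…,r_m be real numbers. Encode a nonempty trajectory ⟨s₀,a₁,s₁,…,s_{n−1},a_n⟩ as the word w = (s₀,a₁)(s₁,a₂)⋯(s_{n−1},a_n) ∈ Σ*, and define the non-Markovian reward R(w) = Σ_{i : A_i accepts w} r_i. Define the extended MDP with state set S' = Q₁×⋯×Q_m×S, transitions Tr'((q₁,…,q_m,s), a) assigning to (q'₁,…,q'_m,s') probability Tr(s,a)(s') if q'_i = δ_i(q_i,(s,a)) for all i, and probability 0 otherwise, and Markovian reward R'((q₁,…,q_m,s),a) = Σ_{i : δ_i(q_i,(s,a)) ∈ F_i} r_i. Let τ(q₁,…,q_m,s) = s and σ(s) = (q_{10},…,q_{m0},s). Then: (1) τ(σ(s)) = s for all s ∈ S; (2) for all s₁,s₂ ∈ S, a ∈ A and s'₁ ∈ S' with Tr(s₁,a)(s₂) > 0 and τ(s'₁) = s₁, there is a unique s'₂ ∈ S' with τ(s'₂)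 = s₂ and Tr'(s'₁,a)(s'₂) = Tr(s₁,a)(s₂); (3) for every nonempty trajectory ⟨s₀,a₁,…,s_{n−1},a_n⟩ and the corresponding extended trajectory ⟨s'₀,a₁,…,s'_{n−1},a_n⟩ determined by s'₀ = σ(s₀) and, for each step, following the unique successor of condition (2), one has R((s₀,a₁)⋯(s_{n−1},a_n)) = R'(s'_{n−1}, a_n). -/
import Mathlib


open scoped ENNReal

section

variable {S A : Type*} {m : ℕ} (Q : Fin m → Type*)

/-- The map `τ : S' → S` from extended states `(q₁,…,q_m,s)` to `s`. -/
def tauMap : ((∀ i, Q i) × S) → S := fun s' => s'.2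

/-- The map `σ : S → S'`, `σ(s) = (q₁₀,…,q_m0,s)`. -/
def sigmaMap (q0 : ∀ i, Q i) : S → ((∀ i, Q i) × S) := fun s => (q0, s)

/-- The transition probabilities of the extended MDP: `Tr'((q₁,…,q_m,s),a)(q'₁,…,q'_m,s')`
is `Tr(s,a)(s')` when `q'_i = δ_i(q_i,(s,a))` for all `i`, and `0` otherwise. -/
noncomputable def extTr (Tr : S → A → PMF S) (δ : ∀ i, Q i → S × A → Q i) :
    ((∀ i, Q i) × S) → A → ((∀ i, Q i) × S) → ℝ≥0∞ :=
  fun s' a t' =>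
    haveI := Classical.propDecidable
    if ∀ i, t'.1 i = δ i (s'.1 i) (s'.2, a) then Tr s'.2 a t'.2 else 0

/-- The non-Markovian reward of a word `w ∈ (S × A)*`: `R(w) = Σ_{i : A_i accepts w} r_i`,
where `A_i` is the DFA `(Q i, q0 i, δ i, F i)`. -/
noncomputable def nonMarkovReward (q0 : ∀ i, Q i) (δ : ∀ i, Q i → S × A → Q i)
    (F : ∀ i, Set (Q i)) (r : Fin m → ℝ) (w : List (S × A)) : ℝ :=
  ∑ i, (F i).indicator (fun _ => r i) (w.foldl (δ i) (q0 i))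

/-- The Markovian reward of the extended MDP:
`R'((q₁,…,q_m,s),a) = Σ_{i : δ_i(q_i,(s,a)) ∈ F_i} r_i`. -/
noncomputable def extReward (δ : ∀ i, Q i → S × A → Q i) (F : ∀ i, Set (Q i)) (r : Fin m → ℝ) :
    ((∀ i, Q i) × S) → A → ℝ :=
  fun s' a => ∑ i, (F i).indicator (fun _ => r i) (δ i (s'.1 i) (s'.2, a))

/-- The extended MDP built from the DFAs `A_i = (Q i, q0 i, δ i, F i)` and rewards `r i` is
equivalent to the NMRDP with non-Markovian reward `R(w) = Σ_{i : A_i accepts w} r_i`: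
(1) `τ ∘ σ = id`; (2) transitions lift uniquely with the same probability; (3) the
non-Markovian reward of any nonempty trajectory equals the Markovian reward `R'` at the
corresponding extended state reached before the last step. -/
theorem extended_MDP_equivalent_to_NMRDP [Nonempty S] [Nonempty A]
    (Tr : S → A → PMF S) (q0 : ∀ i, Q i) (δ : ∀ i, Q i → S × A → Q i)
    (F : ∀ i, Set (Q i)) (r : Fin m → ℝ) :
    (∀ s : S, tauMap Q (sigmaMap Q q0 s) = s) ∧
    (∀ (s₁ s₂ : S) (a : A) (s₁' : (∀ i, Q i) × S),
      0 < Tr s₁ a s₂ → tauMap Q s₁' = s₁ →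
        ∃! s₂' : (∀ i, Q i) × S,
          tauMap Q s₂' = s₂ ∧ extTr Q Tr δ s₁' a s₂' = Tr s₁ a s₂) ∧
    (∀ (w : List (S × A)) (h : w ≠ []),
      nonMarkovReward Q q0 δ F r w =
        extReward Q δ F r
          (fun i => w.dropLast.foldl (δ i) (q0 i), (w.getLast h).1)
          (w.getLast h).2) := by
  refine ⟨fun s => rfl, ?_, ?_⟩
  · intro s₁ s₂ a s₁' hpos hτ
    subst hτ
    refine ⟨(fun i => δ i (s₁'.1 i) (s₁'.2, a), s₂), ⟨rfl, ?_⟩, ?_⟩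
    · simp [extTr, tauMap]
    · rintro ⟨q', t'⟩ ⟨hτ', htr⟩
      cases hτ'
      simp only [extTr] at htr
      split at htr
      · next h => exact Prod.ext (funext h) rfl
      · exact absurd htr.symm (hpos.ne')
  · intro w hw
    conv_lhs => rw [← List.dropLast_append_getLast hw]
    simp [nonMarkovReward, extReward, List.foldl_append]
end
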